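/- Let G = (V, E) be a graph with |V| = n that admits a nice tree decomposition of width τ with N nodes. Then there exist a polytope P = {x ∈ ℝ^m : Ax ≤ b, Cx = d}, where m and the total number of rows of A and C are at most c·3^(τ+1)·N for an absolute constant c, and a linear map π : ℝ^m → ℝ^V, such that π(P) equals the odd cycle transversal polytope of G, i.e., the convex hull of the characteristic vectors χ_W ∈ {0,1}^V of all sets W ⊆ V such that the induced subgraph G[V \ W] is bipartite. -/

import Mathlib

/-! Common definitions: CSP instances, configurations, nice tree decompositions,
and the polytopes from Kolman–Koutecký. -/

/-- A constraint with scope `scope`; its satisfaction depends only on the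
coordinates in the scope (it is a relation on the domains of the scope). -/
structure CSPConstraint (n : ℕ) where
  scope : Finset (Fin n)
  sat : (Fin n → ℝ) → Prop
  sat_congr : ∀ z z' : Fin n → ℝ, (∀ v ∈ scope, z v = z' v) → sat z → sat z'

/-- A CSP instance: finite real domains, hard constraints and soft constraints. -/
structure CSPInstance (n : ℕ) where
  dom : Fin n → Finset ℝ
  hard : List (CSPConstraint n)
  soft : List (CSPConstraint n)

variable {n : ℕ}

/-- The list of all constraints (hard and soft). -/
def consList (Q : CSPInstance n) : List (CSPConstraint n) := Q.hard ++ Q.soft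

/-- A feasible assignment: values in the domains, satisfying all hard constraints. -/
def Feasible (Q : CSPInstance n) (z : Fin n → ℝ) : Prop :=
  (∀ v, z v ∈ Q.dom v) ∧ ∀ C ∈ Q.hard, C.sat z

-- Configurations of a set `W` of variables: partial assignments (with `none`
-- playing the role of the symbol `λ`) defined exactly on `W`.
open Classical in
noncomputable def configs (Q : CSPInstance n) (W : Finset (Fin n)) :
    Finset (Fin n → Option ℝ) :=
  (Fintype.piFinset fun v =>
      if v ∈ W then (Q.dom v).image some else ({none} : Finset (Option ℝ))).filter
    (fun K => ∀ C ∈ Q.hard, C.scope ⊆ W → C.sat (fun v => (K v).getD 0))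

/-- Restriction `K↾_W` of a configuration: coordinates outside `W` are set to `λ`. -/
def restrictCfg (K : Fin n → Option ℝ) (W : Finset (Fin n)) : Fin n → Option ℝ :=
  fun v => if v ∈ W then K v else none

/-- A (rooted) nice tree: leaves, introduce nodes, forget nodes and join nodes. -/
inductive NiceTree (n : ℕ) : Type
  | leaf (v : Fin n) : NiceTree n
  | introduce (v : Fin n) (t : NiceTree n) : NiceTree n
  | forget (v : Fin n) (t : NiceTree n) : NiceTree n
  | join (t₁ t₂ : NiceTree n) : NiceTree n

namespace NiceTree

/-- The bag of the root node of a nice tree. -/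
def bag : NiceTree n → Finset (Fin n)
  | leaf v => {v}
  | introduce v t => insert v (bag t)
  | forget v t => (bag t).erase v
  | join t₁ _ => bag t₁

/-- All vertices appearing in bags of the tree. -/
def verts : NiceTree n → Finset (Fin n)
  | leaf v => {v}
  | introduce v t => insert v (verts t)
  | forget _ t => verts t
  | join t₁ t₂ => verts t₁ ∪ verts t₂

/-- Number of nodes of the tree. -/
def size : NiceTree n → ℕ
  | leaf _ => 1
  | introduce _ t => size t + 1
  | forget _ t => size t + 1
  | join t₁ t₂ => size t₁ + size t₂ + 1

/-- Structural validity of a nice tree (in particular, the connectivity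
condition of tree decompositions: an introduced vertex does not occur below,
and vertices shared by the two subtrees of a join lie in its bag). -/
def valid : NiceTree n → Prop
  | leaf _ => True
  | introduce v t => v ∉ verts t ∧ valid t
  | forget v t => v ∈ bag t ∧ valid t
  | join t₁ t₂ => bag t₁ = bag t₂ ∧ verts t₁ ∩ verts t₂ ⊆ bag t₁ ∧ valid t₁ ∧ valid t₂

/-- `isSubtree s t`: `s` is a node (subtree) of `t`. -/
def isSubtree (s : NiceTree n) : NiceTree n → Prop
  | leaf v => s = leaf v
  | introduce v t => s = introduce v t ∨ isSubtree s t
  | forget v t => s = forget v t ∨ isSubtree s t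
  | join t₁ t₂ => s = join t₁ t₂ ∨ isSubtree s t₁ ∨ isSubtree s t₂

-- The configurations relevant to the subtree: `ℛ(a) = ⋃_{b ∈ T(a)} 𝒦(B(b))`.
open Classical in
noncomputable def relConfigs (Q : CSPInstance n) : NiceTree n → Finset (Fin n → Option ℝ)
  | leaf v => configs Q {v}
  | introduce v t => configs Q (insert v (bag t)) ∪ relConfigs Q t
  | forget v t => configs Q ((bag t).erase v) ∪ relConfigs Q t
  | join t₁ t₂ => relConfigs Q t₁ ∪ relConfigs Q t₂

end NiceTree

/-- A valid nice tree decomposition for the CSP instance `Q`: every variable is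
in some bag and every constraint scope is contained in some bag. -/
def IsNiceTreeDecompCSP (Q : CSPInstance n) (T : NiceTree n) : Prop :=
  T.valid ∧ (∀ v : Fin n, v ∈ T.verts) ∧
    ∀ C ∈ consList Q, ∃ s : NiceTree n, s.isSubtree T ∧ C.scope ⊆ s.bag

/-- A valid nice tree decomposition of a graph `G`: every vertex is in some bag
and both endpoints of every edge lie in a common bag. -/
def IsNiceTreeDecompGraph (G : SimpleGraph (Fin n)) (T : NiceTree n) : Prop :=
  T.valid ∧ (∀ v : Fin n, v ∈ T.verts) ∧
    ∀ u v : Fin n, G.Adj u v → ∃ s : NiceTree n, s.isSubtree T ∧ u ∈ s.bag ∧ v ∈ s.bag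

/-- The constraint graph of a CSP instance. -/
def constraintGraph (Q : CSPInstance n) : SimpleGraph (Fin n) where
  Adj u v := u ≠ v ∧ ∃ C ∈ consList Q, u ∈ C.scope ∧ v ∈ C.scope
  symm := by
    constructor
    rintro u v ⟨hne, C, hC, hu, hv⟩
    exact ⟨hne.symm, C, hC, hv, hu⟩
  loopless := by
    constructor
    rintro v ⟨hne, -⟩
    exact hne rfl

-- The LP constraints of `P(Q)` relevant to the subtree `t`: bag equations and
-- consistency equations at introduce and forget nodes of `t`.
def RelCons (Q : CSPInstance n) (f : (Fin n → Option ℝ) → ℝ) : NiceTree n → Prop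
  | .leaf v => ∑ K ∈ configs Q {v}, f K = 1
  | .introduce v t =>
      RelCons Q f t ∧ (∑ K ∈ configs Q (insert v t.bag), f K = 1) ∧
      ∀ K ∈ configs Q t.bag,
        ∑ K' ∈ (configs Q (insert v t.bag)).filter
            (fun K' => restrictCfg K' t.bag = K), f K' = f K
  | .forget v t =>
      RelCons Q f t ∧ (∑ K ∈ configs Q (t.bag.erase v), f K = 1) ∧
      ∀ K ∈ configs Q (t.bag.erase v),
        ∑ K' ∈ (configs Q t.bag).filter
            (fun K' => restrictCfg K' (t.bag.erase v) = K), f K' = f K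
  | .join t₁ t₂ => RelCons Q f t₁ ∧ RelCons Q f t₂

/-- All the constraints of `P(Q)` relevant to the subtree `t`, including the
bounds `0 ≤ f(K) ≤ 1` for relevant configurations. -/
def RelevantLP (Q : CSPInstance n) (t : NiceTree n) (f : (Fin n → Option ℝ) → ℝ) : Prop :=
  RelCons Q f t ∧ ∀ K ∈ t.relConfigs Q, 0 ≤ f K ∧ f K ≤ 1

/-- The polytope `P(Q) ⊆ ℝ^{𝒦_ℬ}` (coordinates outside `𝒦_ℬ` are zero). -/
def Ppoly (Q : CSPInstance n) (T : NiceTree n) : Set ((Fin n → Option ℝ) → ℝ) :=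
  {f | RelevantLP Q T f ∧ ∀ K, K ∉ T.relConfigs Q → f K = 0}

/-- Extended feasible assignments `(z, h)`. -/
def ExtAssignments (Q : CSPInstance n) :
    Set ((Fin n → ℝ) × (Fin Q.soft.length → ℝ)) :=
  {p | Feasible Q p.1 ∧ ∀ i : Fin Q.soft.length,
      ((Q.soft.get i).sat p.1 ∧ p.2 i = 1) ∨ (¬ (Q.soft.get i).sat p.1 ∧ p.2 i = 0)}

/-- `CSP(Q)`: the convex hull of all extended feasible assignments. -/
def CSPpolytope (Q : CSPInstance n) : Set ((Fin n → ℝ) × (Fin Q.soft.length → ℝ)) :=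
  convexHull ℝ (ExtAssignments Q)

/-- `CSP'(Q)`: the convex hull of all feasible assignments. -/
def CSPpolytope' (Q : CSPInstance n) : Set (Fin n → ℝ) :=
  convexHull ℝ {z | Feasible Q z}

/-- The `y`-variables of the basic LP: one for each `v ∈ V` and `i ∈ D_v`. -/
abbrev YType (Q : CSPInstance n) := (v : Fin n) → {i : ℝ // i ∈ Q.dom v} → ℝ

/-- The `g`-variables of the basic LP: one for each constraint `C_U ∈ 𝒞 ∪ ℋ`
and each configuration `K ∈ 𝒦(U)`. -/
abbrev GType (Q : CSPInstance n) :=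
  (c : Fin (consList Q).length) →
    {K : Fin n → Option ℝ // K ∈ configs Q ((consList Q).get c).scope} → ℝ

/-- The basic LP (1)–(3). -/
def BasicLP (Q : CSPInstance n) (p : YType Q × GType Q) : Prop :=
  (∀ v : Fin n, ∑ i ∈ (Q.dom v).attach, p.1 v i = 1) ∧
  (∀ c : Fin (consList Q).length, ∀ v ∈ ((consList Q).get c).scope,
    ∀ (i : ℝ) (hi : i ∈ Q.dom v),
      ∑ K ∈ (configs Q ((consList Q).get c).scope).attach.filter
          (fun K => K.1 v = some i), p.2 c K = p.1 v ⟨i, hi⟩) ∧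
  (∀ v i, 0 ≤ p.1 v i ∧ p.1 v i ≤ 1) ∧ (∀ c K, 0 ≤ p.2 c K ∧ p.2 c K ≤ 1)

/-- Integrality (all coordinates in `{0,1}`) of a `(y, g)` vector. -/
def IntegralYG (Q : CSPInstance n) (p : YType Q × GType Q) : Prop :=
  (∀ v i, p.1 v i = 0 ∨ p.1 v i = 1) ∧ ∀ c K, p.2 c K = 0 ∨ p.2 c K = 1

-- The map sending a (feasible) assignment `z` to the `(y, g)` vector of the basic LP.
open Classical in
noncomputable def exMap (Q : CSPInstance n) (z : Fin n → ℝ) : YType Q × GType Q :=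
  (fun v i => if z v = i.1 then 1 else 0,
   fun c K => if ∀ u ∈ ((consList Q).get c).scope, K.1 u = some (z u) then 1 else 0)


/-!
A set `W` is an odd cycle transversal, together with a 2-colouring of `V \ W`, exactly when
the colouring `g : V → Option Bool` (`none` on `W`) is proper on every edge, and as every edge
lies in a bag it suffices that `g` be proper inside every bag. For a node `t`, take the convex
hull of the pairs (indicator of the deleted vertices below `t`, unit vector of the configuration
`g|bag t`). Two polytopes of this kind can be glued along their configuration coordinates by just
identifying them: since these coordinates are vertices of a simplex, every point disintegrates
over the configurations, so the fibre product of the two hulls is the hull of the fibre product.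
Introduce and join nodes are such gluings (for introduce, with the simplex spanned by the at most
`3 ^ (τ + 1)` configurations of the new bag), and forget nodes are linear images, so every node
adds `O(3 ^ (τ + 1))` variables and constraints.
-/

open Set

def HasExtendedFormulation {M : Type*} [AddCommGroup M] [Module ℝ M] (P : Set M)
    (nv nc : ℕ) : Prop :=
  ∃ (V R E : Type) (_ : Finite V) (_ : Finite R) (_ : Finite E)
    (A : (V → ℝ) →ₗ[ℝ] R → ℝ) (b : R → ℝ) (C : (V → ℝ) →ₗ[ℝ] E → ℝ) (d : E → ℝ)
    (π : (V → ℝ) →ₗ[ℝ] M),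
    Nat.card V ≤ nv ∧ Nat.card R + Nat.card E ≤ nc ∧ π '' {x | A x ≤ b ∧ C x = d} = P

namespace HasExtendedFormulation

open LinearEquiv (sumArrowLequivProdArrow)

variable {M M₁ M₂ N : Type*} [AddCommGroup M] [Module ℝ M] [AddCommGroup M₁] [Module ℝ M₁]
  [AddCommGroup M₂] [Module ℝ M₂] [AddCommGroup N] [Module ℝ N] {P : Set M} {nv nc : ℕ}

theorem mono (h : HasExtendedFormulation P nv nc) {nv' nc' : ℕ} (hv : nv ≤ nv')
    (hc : nc ≤ nc') : HasExtendedFormulation P nv' nc' := by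
  obtain ⟨V, R, E, iV, iR, iE, A, b, C, d, π, hV, hRE, hP⟩ := h
  exact ⟨V, R, E, iV, iR, iE, A, b, C, d, π, hV.trans hv, hRE.trans hc, hP⟩

theorem image (h : HasExtendedFormulation P nv nc) (f : M →ₗ[ℝ] N) :
    HasExtendedFormulation (f '' P) nv nc := by
  obtain ⟨V, R, E, iV, iR, iE, A, b, C, d, π, hV, hRE, rfl⟩ := h
  exact ⟨V, R, E, iV, iR, iE, A, b, C, d, f ∘ₗ π, hV, hRE,
    by rw [LinearMap.coe_comp, image_comp]⟩

theorem prod {P₁ : Set M₁} {P₂ : Set M₂} {nv₁ nc₁ nv₂ nc₂ : ℕ}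
    (h₁ : HasExtendedFormulation P₁ nv₁ nc₁) (h₂ : HasExtendedFormulation P₂ nv₂ nc₂) :
    HasExtendedFormulation (P₁ ×ˢ P₂) (nv₁ + nv₂) (nc₁ + nc₂) := by
  obtain ⟨V₁, R₁, E₁, _, _, _, A₁, b₁, C₁, d₁, π₁, hV₁, hRE₁, rfl⟩ := h₁
  obtain ⟨V₂, R₂, E₂, _, _, _, A₂, b₂, C₂, d₂, π₂, hV₂, hRE₂, rfl⟩ := h₂
  let split := sumArrowLequivProdArrow V₁ V₂ ℝ ℝ
  let A := (sumArrowLequivProdArrow R₁ R₂ ℝ ℝ).symm.toLinearMap ∘ₗ A₁.prodMap A₂ ∘ₗ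
    split.toLinearMap
  let C := (sumArrowLequivProdArrow E₁ E₂ ℝ ℝ).symm.toLinearMap ∘ₗ C₁.prodMap C₂ ∘ₗ
    split.toLinearMap
  have hS : {x | A x ≤ Sum.elim b₁ b₂ ∧ C x = Sum.elim d₁ d₂} =
      split ⁻¹' ({x | A₁ x ≤ b₁ ∧ C₁ x = d₁} ×ˢ {x | A₂ x ≤ b₂ ∧ C₂ x = d₂}) := by
    ext x
    change Sum.elim _ _ ≤ Sum.elim _ _ ∧ Sum.elim _ _ = Sum.elim _ _ ↔ _
    rw [Sum.elim_le_elim_iff, Sum.elim_eq_iff]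
    exact and_and_and_comm
  refine ⟨V₁ ⊕ V₂, R₁ ⊕ R₂, E₁ ⊕ E₂, inferInstance, inferInstance, inferInstance, A,
    Sum.elim b₁ b₂, C, Sum.elim d₁ d₂, π₁.prodMap π₂ ∘ₗ split.toLinearMap,
    by rw [Nat.card_sum]; omega, by rw [Nat.card_sum, Nat.card_sum]; omega, ?_⟩
  rw [hS, LinearMap.coe_comp, image_comp, LinearEquiv.coe_coe,
    image_preimage_eq _ split.surjective, LinearMap.coe_prodMap, prodMap_image_prod]

theorem inter_eq (h : HasExtendedFormulation P nv nc) {K : Type} [Finite K]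
    (ℓ : M →ₗ[ℝ] K → ℝ) (e : K → ℝ) :
    HasExtendedFormulation {p ∈ P | ℓ p = e} nv (nc + Nat.card K) := by
  obtain ⟨V, R, E, iV, iR, iE, A, b, C, d, π, hV, hRE, rfl⟩ := h
  refine ⟨V, R, E ⊕ K, iV, iR, inferInstance, A, b,
    (sumArrowLequivProdArrow E K ℝ ℝ).symm ∘ₗ C.prod (ℓ ∘ₗ π), Sum.elim d e, π, hV,
    by rw [Nat.card_sum]; omega, ?_⟩
  ext p
  constructor
  · rintro ⟨x, ⟨hA, hCℓ⟩, rfl⟩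
    obtain ⟨hC, hℓ⟩ := Sum.elim_eq_iff.mp hCℓ
    exact ⟨⟨x, ⟨hA, hC⟩, rfl⟩, hℓ⟩
  · rintro ⟨⟨x, ⟨hA, hC⟩, rfl⟩, hℓ⟩
    exact ⟨x, ⟨hA, Sum.elim_eq_iff.mpr ⟨hC, hℓ⟩⟩, rfl⟩

theorem fiberProd {K : Type} [Finite K] {P₁ : Set (M₁ × (K → ℝ))} {P₂ : Set (M₂ × (K → ℝ))}
    {nv₁ nc₁ nv₂ nc₂ : ℕ} (h₁ : HasExtendedFormulation P₁ nv₁ nc₁)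
    (h₂ : HasExtendedFormulation P₂ nv₂ nc₂) :
    HasExtendedFormulation {p : M₁ × M₂ × (K → ℝ) | (p.1, p.2.2) ∈ P₁ ∧ (p.2.1, p.2.2) ∈ P₂}
      (nv₁ + nv₂) (nc₁ + nc₂ + Nat.card K) := by
  let fst₁ := LinearMap.fst ℝ (M₁ × (K → ℝ)) (M₂ × (K → ℝ))
  let snd₁ := LinearMap.snd ℝ (M₁ × (K → ℝ)) (M₂ × (K → ℝ))
  convert ((h₁.prod h₂).inter_eq
      (LinearMap.snd ℝ M₁ _ ∘ₗ fst₁ - LinearMap.snd ℝ M₂ _ ∘ₗ snd₁) 0).image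
    ((LinearMap.fst ℝ M₁ _ ∘ₗ fst₁).prod
      ((LinearMap.fst ℝ M₂ _ ∘ₗ snd₁).prod (LinearMap.snd ℝ M₁ _ ∘ₗ fst₁))) using 1
  ext ⟨e₁, e₂, μ⟩
  constructor
  · rintro ⟨h₁, h₂⟩
    exact ⟨((e₁, μ), (e₂, μ)), ⟨⟨h₁, h₂⟩, sub_self μ⟩, rfl⟩
  · rintro ⟨⟨⟨a, μ'⟩, ⟨b, ν⟩⟩, ⟨⟨h₁, h₂⟩, hμν⟩, hp⟩
    obtain rfl : ν = μ' := (sub_eq_zero.mp hμν).symm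
    cases hp
    exact ⟨h₁, h₂⟩

theorem exists_matrix (h : HasExtendedFormulation P nv nc) :
    ∃ (m p q : ℕ) (A : Matrix (Fin p) (Fin m) ℝ) (b : Fin p → ℝ)
      (C : Matrix (Fin q) (Fin m) ℝ) (d : Fin q → ℝ) (π : (Fin m → ℝ) →ₗ[ℝ] M),
      m ≤ nv ∧ p + q ≤ nc ∧ π '' {x | A.mulVec x ≤ b ∧ C.mulVec x = d} = P := by
  obtain ⟨V, R, E, iV, iR, iE, A, b, C, d, π, hV, hRE, rfl⟩ := h
  let eV := LinearEquiv.funCongrLeft ℝ ℝ (Finite.equivFin V)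
  let eR := LinearEquiv.funCongrLeft ℝ ℝ (Finite.equivFin R).symm
  let eE := LinearEquiv.funCongrLeft ℝ ℝ (Finite.equivFin E).symm
  refine ⟨_, _, _, LinearMap.toMatrix' (eR ∘ₗ A ∘ₗ eV), eR b,
    LinearMap.toMatrix' (eE ∘ₗ C ∘ₗ eV), eE d, π ∘ₗ eV, hV, hRE, ?_⟩
  have hle : ∀ y : R → ℝ, eR y ≤ eR b ↔ y ≤ b := fun y =>
    ⟨fun h r => by simpa [eR] using h (Finite.equivFin R r), fun h i => h _⟩
  have hpre : {x | (LinearMap.toMatrix' (eR ∘ₗ A ∘ₗ eV)).mulVec x ≤ eR b ∧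
      (LinearMap.toMatrix' (eE ∘ₗ C ∘ₗ eV)).mulVec x = eE d} =
        eV ⁻¹' {x | A x ≤ b ∧ C x = d} := by
    ext x
    simp only [LinearMap.toMatrix'_mulVec, mem_ofPred_eq, mem_preimage, LinearMap.comp_apply,
      LinearEquiv.coe_coe, hle, eE.injective.eq_iff]
  rw [hpre, LinearMap.coe_comp, image_comp, LinearEquiv.coe_coe,
    image_preimage_eq _ eV.surjective]

end HasExtendedFormulation

theorem hasExtendedFormulation_convexHull {M : Type} [AddCommGroup M] [Module ℝ M] {s : Set M}
    (hs : s.Finite) : HasExtendedFormulation (convexHull ℝ s) (Nat.card s) (Nat.card s + 1) := by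
  let := hs.fintype
  refine ⟨s, s, Unit, inferInstance, inferInstance, inferInstance, -LinearMap.id, 0,
    LinearMap.pi fun _ => ∑ i, LinearMap.proj i, 1, ∑ x : s, (LinearMap.proj x).smulRight x.1,
    le_rfl, by simp, ?_⟩
  rw [hs.convexHull_eq_image]
  congr 1
  ext x
  simp [stdSimplex, Pi.le_def, funext_iff]

section FiberProduct

variable {A A₁ A₂ E E₁ E₂ K : Type*} [AddCommGroup E] [Module ℝ E] [AddCommGroup E₁]
  [Module ℝ E₁] [AddCommGroup E₂] [Module ℝ E₂] [Fintype K] [DecidableEq K]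

theorem mem_stdSimplex_of_mem_convexHull {S : Set A} {x : A → E} {k : A → K} {e : E}
    {μ : K → ℝ} (h : (e, μ) ∈ convexHull ℝ ((fun a => (x a, Pi.single (k a) (1 : ℝ))) '' S)) :
    μ ∈ stdSimplex ℝ K := by
  rw [← convexHull_rangle_single_eq_stdSimplex]
  have hμ := (LinearMap.snd ℝ E (K → ℝ)).image_convexHull _ ▸ mem_image_of_mem _ h
  refine convexHull_mono ?_ hμ
  rintro _ ⟨_, ⟨a, _, rfl⟩, rfl⟩
  exact ⟨k a, rfl⟩

theorem exists_eq_sum_smul_of_mem_convexHull {S : Set A} {x : A → E} {k : A → K} {e : E}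
    {μ : K → ℝ} (h : (e, μ) ∈ convexHull ℝ ((fun a => (x a, Pi.single (k a) (1 : ℝ))) '' S)) :
    ∃ e' : K → E, (∀ j, μ j ≠ 0 → e' j ∈ convexHull ℝ (x '' {a ∈ S | k a = j})) ∧
      e = ∑ j, μ j • e' j := by
  obtain ⟨ι, _, w, z, hw₀, -, hz, hsum⟩ := mem_convexHull_iff_exists_fintype.mp h
  choose a haS hza using hz
  have he : e = ∑ i, w i • x (a i) := by
    have := congrArg Prod.fst hsum
    simp only [← hza, Prod.fst_sum, Prod.smul_fst] at this
    exact this.symm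
  have hμ : ∀ j, μ j = ∑ i with k (a i) = j, w i := by
    intro j
    have := congrFun (congrArg Prod.snd hsum) j
    simp only [← hza, Prod.snd_sum, Prod.smul_snd, Finset.sum_apply, Pi.smul_apply,
      Pi.single_apply, smul_eq_mul, mul_ite, mul_one, mul_zero] at this
    rw [← this, Finset.sum_filter]
    exact Finset.sum_congr rfl fun i _ => by simp only [eq_comm]
  have hμ₀ : ∀ j, 0 ≤ μ j := fun j => (hμ j).symm ▸ Finset.sum_nonneg fun i _ => hw₀ i
  -- `e' j` is the barycentre of the part of the representation of `e` lying over `j`.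
  refine ⟨fun j => (Finset.univ.filter fun i => k (a i) = j).centerMass w (x ∘ a),
    fun j hj => ?_, ?_⟩
  · refine Finset.centerMass_mem_convexHull _ (fun i _ => hw₀ i) ?_ fun i hi => ?_
    · exact (hμ j ▸ hμ₀ j).lt_of_ne' (hμ j ▸ hj)
    · exact ⟨a i, ⟨haS i, (Finset.mem_filter.mp hi).2⟩, rfl⟩
  · rw [he, ← Finset.sum_fiberwise Finset.univ (fun i => k (a i))]
    refine Finset.sum_congr rfl fun j _ => ?_
    dsimp only [Finset.centerMass]
    rw [← hμ j, smul_smul]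
    by_cases hj : μ j = 0
    · have hw : ∀ i ∈ Finset.univ.filter fun i => k (a i) = j, w i = 0 :=
        (Finset.sum_eq_zero_iff_of_nonneg fun i _ => hw₀ i).mp (hμ j ▸ hj)
      rw [hj, zero_mul, zero_smul]
      exact Finset.sum_eq_zero fun i hi => by rw [hw i hi, zero_smul]
    · rw [mul_inv_cancel₀ hj, one_smul]
      rfl

theorem convexHull_fiberProd {S₁ : Set A₁} {S₂ : Set A₂} (x₁ : A₁ → E₁) (x₂ : A₂ → E₂)
    (k₁ : A₁ → K) (k₂ : A₂ → K) :
    {p : E₁ × E₂ × (K → ℝ) |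
        (p.1, p.2.2) ∈ convexHull ℝ ((fun a => (x₁ a, Pi.single (k₁ a) (1 : ℝ))) '' S₁) ∧
        (p.2.1, p.2.2) ∈ convexHull ℝ ((fun a => (x₂ a, Pi.single (k₂ a) (1 : ℝ))) '' S₂)} =
      convexHull ℝ ((fun q : A₁ × A₂ => (x₁ q.1, x₂ q.2, Pi.single (k₁ q.1) (1 : ℝ))) ''
        {q | q.1 ∈ S₁ ∧ q.2 ∈ S₂ ∧ k₁ q.1 = k₂ q.2}) := by
  apply Subset.antisymm
  · rintro ⟨e₁, e₂, μ⟩ ⟨h₁, h₂⟩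
    dsimp only at h₁ h₂
    obtain ⟨hμ₀, hμ₁⟩ := mem_stdSimplex_of_mem_convexHull h₁
    obtain ⟨e₁', he₁', rfl⟩ := exists_eq_sum_smul_of_mem_convexHull h₁
    obtain ⟨e₂', he₂', rfl⟩ := exists_eq_sum_smul_of_mem_convexHull h₂
    have hfiber : ∀ j ∈ Finset.univ.filter (μ · ≠ 0), (e₁' j, e₂' j, (Pi.single j 1 : K → ℝ)) ∈
        convexHull ℝ ((fun q : A₁ × A₂ => (x₁ q.1, x₂ q.2, Pi.single (k₁ q.1) (1 : ℝ))) ''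
          {q | q.1 ∈ S₁ ∧ q.2 ∈ S₂ ∧ k₁ q.1 = k₂ q.2}) := by
      intro j hj
      have hj := (Finset.mem_filter.mp hj).2
      refine convexHull_mono ?_ (mk_mem_convexHull_prod (he₁' j hj)
        (mk_mem_convexHull_prod (he₂' j hj) (subset_convexHull ℝ _ (mem_singleton _))))
      rintro ⟨_, _, _⟩ ⟨⟨a, ⟨haS, rfl⟩, rfl⟩, ⟨b, ⟨hbS, hba⟩, rfl⟩, rfl⟩
      exact ⟨(a, b), ⟨haS, hbS, hba.symm⟩, rfl⟩
    have hsum : (∑ j, μ j • e₁' j, ∑ j, μ j • e₂' j, μ) =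
        ∑ j ∈ Finset.univ.filter (μ · ≠ 0), μ j • (e₁' j, e₂' j, (Pi.single j 1 : K → ℝ)) := by
      rw [Finset.sum_filter_of_ne fun j _ hj => left_ne_zero_of_smul hj]
      simp [Prod.ext_iff, Prod.fst_sum, Prod.snd_sum, ← pi_eq_sum_univ' μ]
    rw [hsum]
    refine (convex_convexHull ℝ _).sum_mem (fun j _ => hμ₀ j) ?_ hfiber
    rw [Finset.sum_filter_ne_zero, hμ₁]
  · refine convexHull_min ?_ fun p hp q hq a b ha hb hab =>
      ⟨convex_convexHull ℝ _ hp.1 hq.1 ha hb hab, convex_convexHull ℝ _ hp.2 hq.2 ha hb hab⟩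
    rintro _ ⟨⟨a, b⟩, ⟨ha, hb, hab⟩, rfl⟩
    exact ⟨subset_convexHull ℝ _ ⟨a, ha, rfl⟩, subset_convexHull ℝ _ ⟨b, hb, by simp [hab]⟩⟩

end FiberProduct

namespace NiceTree

theorem isSubtree_refl (t : NiceTree n) : t.isSubtree t := by
  cases t <;> simp [isSubtree]

theorem bag_subset_verts (t : NiceTree n) : t.bag ⊆ t.verts := by
  induction t with
  | leaf v => exact subset_rfl
  | introduce v t ih => exact Finset.insert_subset_insert v ih
  | forget v t ih => exact (Finset.erase_subset v _).trans ih
  | join t₁ t₂ ih₁ _ => exact ih₁.trans Finset.subset_union_left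

theorem verts_subset_of_isSubtree {s t : NiceTree n} (h : s.isSubtree t) : s.verts ⊆ t.verts := by
  induction t with
  | leaf v => rw [show s = leaf v from h]
  | introduce v t ih =>
    rcases h with rfl | h
    exacts [subset_rfl, (ih h).trans (Finset.subset_insert v _)]
  | forget v t ih =>
    rcases h with rfl | h
    exacts [subset_rfl, ih h]
  | join t₁ t₂ ih₁ ih₂ =>
    rcases h with rfl | h | h
    exacts [subset_rfl, (ih₁ h).trans Finset.subset_union_left,
      (ih₂ h).trans Finset.subset_union_right]

theorem bag_subset_verts_of_isSubtree {s t : NiceTree n} (h : s.isSubtree t) :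
    s.bag ⊆ t.verts :=
  s.bag_subset_verts.trans (verts_subset_of_isSubtree h)

end NiceTree

theorem DependsOn.prodMk {ι β γ : Type*} {α : ι → Type*} {f : (∀ i, α i) → β}
    {g : (∀ i, α i) → γ} {s : Set ι} (hf : DependsOn f s) (hg : DependsOn g s) :
    DependsOn (fun x => (f x, g x)) s :=
  fun _ _ h => Prod.ext (hf h) (hg h)

section Colorings

variable {G : SimpleGraph (Fin n)}

/-- `g u = none` marks `u` as deleted; the other vertices are 2-coloured by `g u = some b`. -/
def IsOCTColoringOn (G : SimpleGraph (Fin n)) (B : Finset (Fin n)) (g : Fin n → Option Bool) :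
    Prop :=
  ∀ u ∈ B, ∀ v ∈ B, G.Adj u v → g u = g v → g u = none

theorem IsOCTColoringOn.mono {B B' : Finset (Fin n)} (h : B' ⊆ B) {g : Fin n → Option Bool}
    (hg : IsOCTColoringOn G B g) : IsOCTColoringOn G B' g :=
  fun u hu v hv => hg u (h hu) v (h hv)

theorem dependsOn_isOCTColoringOn (B : Finset (Fin n)) : DependsOn (IsOCTColoringOn G B) B := by
  have key : ∀ g g' : Fin n → Option Bool, (∀ u ∈ B, g u = g' u) →
      IsOCTColoringOn G B g → IsOCTColoringOn G B g' := by
    intro g g' h hg u hu v hv huv he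
    rw [← h u hu, ← h v hv] at he
    rw [← h u hu]
    exact hg u hu v hv huv he
  exact fun g g' h => propext ⟨key g g' h, key g' g fun u hu => (h u hu).symm⟩

def octColorings (G : SimpleGraph (Fin n)) (t : NiceTree n) : Set (Fin n → Option Bool) :=
  {g | ∀ s : NiceTree n, s.isSubtree t → IsOCTColoringOn G s.bag g}

theorem dependsOn_mem_octColorings (t : NiceTree n) :
    DependsOn (· ∈ octColorings G t) t.verts := fun _ _ h =>
  forall_congr fun _ => forall_congr fun hs => dependsOn_isOCTColoringOn _ fun u hu =>
    h u (NiceTree.bag_subset_verts_of_isSubtree hs hu)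

theorem octColorings_introduce (v : Fin n) (t : NiceTree n) :
    octColorings G (.introduce v t) =
      octColorings G t ∩ {g | IsOCTColoringOn G (insert v t.bag) g} := by
  ext g
  simp only [octColorings, NiceTree.isSubtree, NiceTree.bag, or_imp, forall_and, forall_eq,
    mem_inter_iff, mem_ofPred_eq]
  exact and_comm

theorem octColorings_forget (v : Fin n) (t : NiceTree n) :
    octColorings G (.forget v t) = octColorings G t := by
  ext g
  simp only [octColorings, NiceTree.isSubtree, or_imp, forall_and, forall_eq, mem_ofPred_eq,
    and_iff_right_iff_imp]
  exact fun hg => (hg t t.isSubtree_refl).mono (Finset.erase_subset v t.bag)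

theorem octColorings_join (t₁ t₂ : NiceTree n) :
    octColorings G (.join t₁ t₂) = octColorings G t₁ ∩ octColorings G t₂ := by
  ext g
  simp only [octColorings, NiceTree.isSubtree, or_imp, forall_and, forall_eq, mem_inter_iff,
    mem_ofPred_eq, and_iff_right_iff_imp]
  exact fun hg => hg.1 t₁ t₁.isSubtree_refl

end Colorings

def deletedIndicator (U : Finset (Fin n)) (g : Fin n → Option Bool) : Fin n → ℝ :=
  fun u => if u ∈ U ∧ g u = none then 1 else 0

theorem dependsOn_deletedIndicator (U : Finset (Fin n)) : DependsOn (deletedIndicator U) U :=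
  fun _ _ h => funext fun u => by by_cases hu : u ∈ U <;> simp [deletedIndicator, hu, h u]

theorem deletedIndicator_add_sub_inter (U₁ U₂ : Finset (Fin n)) (g : Fin n → Option Bool) :
    deletedIndicator U₁ g + deletedIndicator U₂ g - deletedIndicator (U₁ ∩ U₂) g =
      deletedIndicator (U₁ ∪ U₂) g := by
  funext u
  by_cases h₁ : u ∈ U₁ <;> by_cases h₂ : u ∈ U₂ <;> by_cases hg : g u = none <;>
    simp [deletedIndicator, h₁, h₂, hg]

-- Reducible, so that lemmas about `Pi.single (k g) 1` such as `convexHull_fiberProd` apply.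
abbrev configVector (B : Finset (Fin n)) (g : Fin n → Option Bool) : (B → Option Bool) → ℝ :=
  Pi.single (B.restrict g) 1

theorem dependsOn_configVector (B : Finset (Fin n)) : DependsOn (configVector B) B :=
  fun _ _ h => congrArg (Pi.single · 1) (funext fun u => h u u.2)

def configDeleted (B : Finset (Fin n)) : ((B → Option Bool) → ℝ) →ₗ[ℝ] Fin n → ℝ :=
  Fintype.linearCombination ℝ fun k =>
    deletedIndicator B fun u => if h : u ∈ B then k ⟨u, h⟩ else none

theorem configDeleted_configVector (B : Finset (Fin n)) (g : Fin n → Option Bool) :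
    configDeleted B (configVector B g) = deletedIndicator B g := by
  rw [configDeleted, Fintype.linearCombination_apply_single, one_smul]
  exact dependsOn_deletedIndicator B fun u hu => dif_pos hu

def configRestrict {B B' : Finset (Fin n)} (h : B' ⊆ B) :
    ((B → Option Bool) → ℝ) →ₗ[ℝ] (B' → Option Bool) → ℝ :=
  Fintype.linearCombination ℝ fun k =>
    Pi.single (Finset.restrict₂ (π := fun _ => Option Bool) h k) 1

theorem configRestrict_configVector {B B' : Finset (Fin n)} (h : B' ⊆ B)
    (g : Fin n → Option Bool) : configRestrict h (configVector B g) = configVector B' g := by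
  rw [configRestrict, Fintype.linearCombination_apply_single, one_smul]
  rfl

theorem card_configs (B : Finset (Fin n)) : Nat.card (B → Option Bool) = 3 ^ B.card := by
  simp

theorem hasExtendedFormulation_convexHull_image_of_dependsOn {M : Type} [AddCommGroup M]
    [Module ℝ M] {U : Finset (Fin n)} {f : (Fin n → Option Bool) → M} (hf : DependsOn f U)
    (S : Set (Fin n → Option Bool)) :
    HasExtendedFormulation (convexHull ℝ (f '' S)) (3 ^ U.card) (3 ^ U.card + 1) := by
  obtain ⟨f', rfl⟩ := dependsOn_iff_exists_comp.mp hf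
  have hsub : (f' ∘ (U : Set (Fin n)).domRestrict) '' S ⊆ range f' := by
    rintro _ ⟨g, -, rfl⟩
    exact mem_range_self _
  have hcard : Nat.card ((f' ∘ (U : Set (Fin n)).domRestrict) '' S) ≤ 3 ^ U.card :=
    (Nat.card_mono (finite_range f') hsub).trans ((Finite.card_range_le f').trans (by simp))
  exact (hasExtendedFormulation_convexHull ((finite_range f').subset hsub)).mono hcard
    (by omega)

def octPoly (G : SimpleGraph (Fin n)) (t : NiceTree n) :
    Set ((Fin n → ℝ) × ((t.bag → Option Bool) → ℝ)) :=
  convexHull ℝ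
    ((fun g => (deletedIndicator t.verts g, configVector t.bag g)) '' octColorings G t)

theorem HasExtendedFormulation.glue {U₁ U₂ B : Finset (Fin n)} (hB : U₁ ∩ U₂ = B)
    {S₁ S₂ : Set (Fin n → Option Bool)} (hS₁ : DependsOn (· ∈ S₁) U₁)
    (hS₂ : DependsOn (· ∈ S₂) U₂) {M : Type} [AddCommGroup M] [Module ℝ M]
    {y : (Fin n → Option Bool) → M} (hy : DependsOn y U₂) {nv₁ nc₁ nv₂ nc₂ : ℕ}
    (h₁ : HasExtendedFormulation (convexHull ℝ
      ((fun g => (deletedIndicator U₁ g, configVector B g)) '' S₁)) nv₁ nc₁)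
    (h₂ : HasExtendedFormulation (convexHull ℝ
      ((fun g => ((deletedIndicator U₂ g, y g), configVector B g)) '' S₂))
      nv₂ nc₂) :
    HasExtendedFormulation (convexHull ℝ
      ((fun g => (deletedIndicator (U₁ ∪ U₂) g, y g)) '' (S₁ ∩ S₂)))
      (nv₁ + nv₂) (nc₁ + nc₂ + 3 ^ B.card) := by
  -- The deleted vertices of `U₁ ∩ U₂ = B` are counted twice; they are read off the configuration.
  let Φ : (Fin n → ℝ) × ((Fin n → ℝ) × M) × ((B → Option Bool) → ℝ) →ₗ[ℝ] (Fin n → ℝ) × M :=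
    (LinearMap.fst ℝ _ _ + LinearMap.fst ℝ _ _ ∘ₗ LinearMap.fst ℝ _ _ ∘ₗ LinearMap.snd ℝ _ _ -
      configDeleted B ∘ₗ LinearMap.snd ℝ _ _ ∘ₗ LinearMap.snd ℝ _ _).prod
      (LinearMap.snd ℝ _ _ ∘ₗ LinearMap.fst ℝ _ _ ∘ₗ LinearMap.snd ℝ _ _)
  have hΦ : ∀ g₁ g₂, Φ (deletedIndicator U₁ g₁, (deletedIndicator U₂ g₂, y g₂),
      configVector B g₁) =
        (deletedIndicator U₁ g₁ + deletedIndicator U₂ g₂ - deletedIndicator B g₁, y g₂) :=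
    fun g₁ g₂ => by simp [Φ, configDeleted_configVector]
  have h := (h₁.fiberProd h₂).image Φ
  rw [convexHull_fiberProd, Φ.image_convexHull, image_image, card_configs] at h
  convert h using 2
  ext p
  constructor
  · rintro ⟨g, ⟨hg₁, hg₂⟩, rfl⟩
    refine ⟨(g, g), ⟨hg₁, hg₂, rfl⟩, ?_⟩
    dsimp only
    rw [hΦ, ← hB, deletedIndicator_add_sub_inter]
  · rintro ⟨⟨a, b⟩, ⟨ha, hb, hab⟩, rfl⟩
    have ha' : ∀ u ∈ U₁, U₁.piecewise a b u = a u := fun u hu => U₁.piecewise_eq_of_mem _ _ hu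
    have hb' : ∀ u ∈ U₂, U₁.piecewise a b u = b u := by
      intro u hu
      by_cases hu₁ : u ∈ U₁
      · rw [ha' u hu₁]
        exact congrFun hab ⟨u, hB ▸ Finset.mem_inter.mpr ⟨hu₁, hu⟩⟩
      · exact U₁.piecewise_eq_of_notMem _ _ hu₁
    refine ⟨U₁.piecewise a b, ⟨(hS₁ ha').mpr ha, (hS₂ hb').mpr hb⟩, ?_⟩
    dsimp only
    rw [hΦ, ← hB, ← dependsOn_deletedIndicator U₁ ha', ← dependsOn_deletedIndicator U₂ hb',
      ← dependsOn_deletedIndicator (U₁ ∩ U₂) fun u hu => ha' u (Finset.mem_inter.mp hu).1,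
      ← hy hb', deletedIndicator_add_sub_inter]

section Nodes

variable {G : SimpleGraph (Fin n)}

theorem hasExtendedFormulation_octPoly_leaf (v : Fin n) :
    HasExtendedFormulation (octPoly G (.leaf v)) 3 4 :=
  hasExtendedFormulation_convexHull_image_of_dependsOn
    ((dependsOn_deletedIndicator {v}).prodMk (dependsOn_configVector {v})) _

theorem HasExtendedFormulation.octPoly_introduce {v : Fin n} {t : NiceTree n} (hv : v ∉ t.verts)
    {nv nc : ℕ} (h : HasExtendedFormulation (octPoly G t) nv nc) :
    HasExtendedFormulation (octPoly G (.introduce v t)) (nv + 3 ^ (insert v t.bag).card)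
      (nc + (3 ^ (insert v t.bag).card + 1) + 3 ^ t.bag.card) := by
  have hB : t.verts ∩ insert v t.bag = t.bag := by
    rw [Finset.inter_insert_of_notMem hv, Finset.inter_eq_right.mpr t.bag_subset_verts]
  have hU : t.verts ∪ insert v t.bag = insert v t.verts := by
    rw [Finset.union_insert, Finset.union_eq_left.mpr t.bag_subset_verts]
  have hnew := hasExtendedFormulation_convexHull_image_of_dependsOn
    (((dependsOn_deletedIndicator _).prodMk (dependsOn_configVector _)).prodMk
      ((dependsOn_configVector t.bag).mono (Finset.subset_insert v t.bag)))
    {g | IsOCTColoringOn G (insert v t.bag) g}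
  have hglue := h.glue hB (dependsOn_mem_octColorings t)
    (S₂ := {g | IsOCTColoringOn G (insert v t.bag) g}) (dependsOn_isOCTColoringOn _)
    (dependsOn_configVector _) hnew
  rwa [hU, ← octColorings_introduce] at hglue

theorem HasExtendedFormulation.octPoly_forget {v : Fin n} {t : NiceTree n} {nv nc : ℕ}
    (h : HasExtendedFormulation (octPoly G t) nv nc) :
    HasExtendedFormulation (octPoly G (.forget v t)) nv nc := by
  have himage := h.image (LinearMap.id.prodMap (configRestrict (t.bag.erase_subset v)))
  rw [octPoly, LinearMap.image_convexHull, image_image] at himage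
  simp only [LinearMap.prodMap_apply, LinearMap.id_apply, configRestrict_configVector] at himage
  rwa [← octColorings_forget v] at himage

theorem HasExtendedFormulation.octPoly_join {t₁ t₂ : NiceTree n} (hbag : t₁.bag = t₂.bag)
    (hint : t₁.verts ∩ t₂.verts ⊆ t₁.bag) {nv₁ nc₁ nv₂ nc₂ : ℕ}
    (h₁ : HasExtendedFormulation (octPoly G t₁) nv₁ nc₁)
    (h₂ : HasExtendedFormulation (octPoly G t₂) nv₂ nc₂) :
    HasExtendedFormulation (octPoly G (.join t₁ t₂)) (nv₁ + nv₂)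
      (nc₁ + nc₂ + 3 ^ t₁.bag.card) := by
  have hB₂ : t₁.bag ⊆ t₂.verts := hbag ▸ t₂.bag_subset_verts
  have hB : t₁.verts ∩ t₂.verts = t₁.bag :=
    Finset.Subset.antisymm hint (Finset.subset_inter t₁.bag_subset_verts hB₂)
  let R := configRestrict hbag.le
  have h₂' := h₂.image ((LinearMap.id.prodMap R).prod (R ∘ₗ LinearMap.snd ℝ _ _))
  rw [octPoly, LinearMap.image_convexHull, image_image] at h₂'
  simp only [LinearMap.prod_apply, Function.prod_apply, LinearMap.prodMap_apply,
    LinearMap.id_apply, LinearMap.comp_apply, LinearMap.snd_apply, R,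
    configRestrict_configVector] at h₂'
  have hglue := h₁.glue hB (dependsOn_mem_octColorings t₁) (dependsOn_mem_octColorings t₂)
    ((dependsOn_configVector t₁.bag).mono hB₂) h₂'
  rwa [← octColorings_join] at hglue

end Nodes

theorem hasExtendedFormulation_octPoly (G : SimpleGraph (Fin n)) {τ : ℕ} {t : NiceTree n}
    (ht : t.valid) (hτ : ∀ s : NiceTree n, s.isSubtree t → s.bag.card ≤ τ + 1) :
    HasExtendedFormulation (octPoly G t) (3 ^ (τ + 1) * t.size) (3 * 3 ^ (τ + 1) * t.size) := by
  have h3 : 3 ≤ 3 ^ (τ + 1) := Nat.le_self_pow (Nat.succ_ne_zero τ) 3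
  have hpow : ∀ {k : ℕ}, k ≤ τ + 1 → 3 ^ k ≤ 3 ^ (τ + 1) := Nat.pow_le_pow_right (by norm_num)
  induction t with
  | leaf v =>
    exact (hasExtendedFormulation_octPoly_leaf v).mono (by simp [NiceTree.size]; omega)
      (by simp [NiceTree.size]; omega)
  | introduce v t ih =>
    have hnew : 3 ^ (insert v t.bag).card ≤ 3 ^ (τ + 1) :=
      hpow (hτ _ (NiceTree.isSubtree_refl _))
    have hold := hpow (hτ t (Or.inr t.isSubtree_refl))
    refine ((ih ht.2 fun s hs => hτ s (Or.inr hs)).octPoly_introduce ht.1).mono ?_ ?_ <;>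
    · show _ ≤ _ * (t.size + 1)
      rw [Nat.mul_succ]
      omega
  | forget v t ih =>
    refine (ih ht.2 fun s hs => hτ s (Or.inr hs)).octPoly_forget.mono ?_ ?_ <;>
    · show _ ≤ _ * (t.size + 1)
      rw [Nat.mul_succ]
      omega
  | join t₁ t₂ ih₁ ih₂ =>
    obtain ⟨hbag, hint, ht₁, ht₂⟩ := ht
    have hjoin : 3 ^ t₁.bag.card ≤ 3 ^ (τ + 1) :=
      hpow (hτ (.join t₁ t₂) (NiceTree.isSubtree_refl _))
    refine ((ih₁ ht₁ fun s hs => hτ s (Or.inr (Or.inl hs))).octPoly_join hbag hint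
      (ih₂ ht₂ fun s hs => hτ s (Or.inr (Or.inr hs)))).mono ?_ ?_ <;>
    · show _ ≤ _ * (t₁.size + t₂.size + 1)
      rw [Nat.mul_succ, Nat.mul_add]
      omega

theorem octColorings_eq_of_isNiceTreeDecompGraph {G : SimpleGraph (Fin n)} {T : NiceTree n}
    (hT : IsNiceTreeDecompGraph G T) :
    octColorings G T = {g | IsOCTColoringOn G Finset.univ g} := by
  ext g
  refine ⟨fun hg u _ v _ huv => ?_, fun hg s _ => hg.mono (Finset.subset_univ _)⟩
  obtain ⟨s, hs, hu, hv⟩ := hT.2.2 u v huv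
  exact hg s hs u hu v hv huv

theorem image_deletedIndicator_univ (G : SimpleGraph (Fin n)) :
    deletedIndicator Finset.univ '' {g | IsOCTColoringOn G Finset.univ g} =
      {x : Fin n → ℝ | ∃ W : Finset (Fin n),
        (∃ κ : Fin n → Bool, ∀ u v : Fin n, G.Adj u v → u ∉ W → v ∉ W → κ u ≠ κ v) ∧
        x = fun v => if v ∈ W then (1 : ℝ) else 0} := by
  ext x
  constructor
  · rintro ⟨g, hg, rfl⟩
    refine ⟨Finset.univ.filter (g · = none), ⟨fun u => (g u).getD false, ?_⟩, ?_⟩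
    · intro u v huv hu hv hκ
      obtain ⟨a, ha⟩ := Option.ne_none_iff_exists'.mp (by simpa using hu)
      obtain ⟨b, hb⟩ := Option.ne_none_iff_exists'.mp (by simpa using hv)
      simp only [ha, hb, Option.getD_some] at hκ
      subst hκ
      simpa [ha] using hg u (Finset.mem_univ u) v (Finset.mem_univ v) huv (ha.trans hb.symm)
    · funext u
      simp [deletedIndicator]
  · rintro ⟨W, ⟨κ, hκ⟩, rfl⟩
    refine ⟨fun u => if u ∈ W then none else some (κ u), fun u _ v _ huv he => ?_, ?_⟩
    · by_cases hu : u ∈ W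
      · simp [hu]
      by_cases hv : v ∈ W
      · simp [hu, hv] at he
      · simp only [hu, hv, if_false, Option.some.injEq] at he
        exact absurd he (hκ u v huv hu hv)
    · funext u
      by_cases hu : u ∈ W <;> simp [deletedIndicator, hu]

/-- Extended formulation of size `O(3^(τ+1)·N)` for the odd
cycle transversal polytope of a graph of treewidth `τ`. -/
theorem oct_extended_formulation :
    ∃ c : ℕ, 0 < c ∧
      ∀ (n : ℕ) (G : SimpleGraph (Fin n)) (T : NiceTree n) (τ : ℕ),
        IsNiceTreeDecompGraph G T →
        (∀ s : NiceTree n, s.isSubtree T → s.bag.card ≤ τ + 1) →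
        ∃ (m p q : ℕ) (A : Matrix (Fin p) (Fin m) ℝ) (bvec : Fin p → ℝ)
          (Cmat : Matrix (Fin q) (Fin m) ℝ) (dvec : Fin q → ℝ)
          (π : (Fin m → ℝ) →ₗ[ℝ] (Fin n → ℝ)),
          m ≤ c * 3 ^ (τ + 1) * T.size ∧ p + q ≤ c * 3 ^ (τ + 1) * T.size ∧
          π '' {x | A.mulVec x ≤ bvec ∧ Cmat.mulVec x = dvec}
            = convexHull ℝ {x : Fin n → ℝ | ∃ W : Finset (Fin n),
                (∃ κ : Fin n → Bool,
                  ∀ u v : Fin n, G.Adj u v → u ∉ W → v ∉ W → κ u ≠ κ v) ∧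
                x = fun v => if v ∈ W then (1 : ℝ) else 0} := by
  refine ⟨3, by norm_num, fun n G T τ hT hτ => ?_⟩
  obtain ⟨m, p, q, A, b, C, d, π, hm, hpq, hπ⟩ :=
    ((hasExtendedFormulation_octPoly G hT.1 hτ).image (LinearMap.fst ℝ _ _)).exists_matrix
  refine ⟨m, p, q, A, b, C, d, π, by rw [mul_assoc]; omega, hpq, ?_⟩
  rw [hπ, octPoly, LinearMap.image_convexHull, image_image, Finset.eq_univ_of_forall hT.2.1,
    octColorings_eq_of_isNiceTreeDecompGraph hT]
  exact congrArg _ (image_deletedIndicator_univ G)
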